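/- Massey's identity (mutual information equals directed information without feedback): Let n ≥ 1 and let X_1,…,X_n and Y_1,…,Y_n be random variables on a probability space taking values in finite sets. Suppose there is no feedback, i.e., for every i ∈ {1,…,n}, the conditional mutual information I(X_i ; Y^{i−1} | X^{i−1}) = 0, where X^{i−1} = (X_1,…,X_{i−1}) and Y^{i−1} = (Y_1,…,Y_{i−1}). Then I(X^n ; Y^n) = Σ_{i=1}^n I(X^i ; Y_i | Y^{i−1}), i.e., the mutual information between X^n and Y^n equals the directed information I(X^n → Y^n). -/
import Mathlib


open MeasureTheory

/-- The probability mass function of a random variable `X` under `μ`: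
`probOf μ X s = μ {X = s}` (as a real number). -/
noncomputable def probOf {Ω S : Type*} [MeasurableSpace Ω] (μ : Measure Ω)
    (X : Ω → S) (s : S) : ℝ :=
  (μ {ω | X ω = s}).toReal

/-- Shannon entropy of a finite-valued random variable `X` under `μ`
(with the convention `0 · log 0 = 0`). -/
noncomputable def entropy {Ω S : Type*} [MeasurableSpace Ω] [Fintype S]
    (μ : Measure Ω) (X : Ω → S) : ℝ :=
  -∑ s, probOf μ X s * Real.log (probOf μ X s)

/-- Conditional entropy `H(X | W) = H(X, W) − H(W)`. -/
noncomputable def condEntropy {Ω S T : Type*} [MeasurableSpace Ω] [Fintype S] [Fintype T]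
    (μ : Measure Ω) (X : Ω → S) (W : Ω → T) : ℝ :=
  entropy μ (fun ω => (X ω, W ω)) - entropy μ W

/-- Conditional mutual information `I(U ; V | W) = H(U|W) + H(V|W) − H(U,V|W)`. -/
noncomputable def condMutualInfo {Ω S T R : Type*} [MeasurableSpace Ω]
    [Fintype S] [Fintype T] [Fintype R]
    (μ : Measure Ω) (U : Ω → S) (V : Ω → T) (W : Ω → R) : ℝ :=
  condEntropy μ U W + condEntropy μ V W - condEntropy μ (fun ω => (U ω, V ω)) W

/-- Mutual information `I(U ; V) = H(U) + H(V) − H(U, V)`. -/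
noncomputable def mutualInfo {Ω S T : Type*} [MeasurableSpace Ω] [Fintype S] [Fintype T]
    (μ : Measure Ω) (U : Ω → S) (V : Ω → T) : ℝ :=
  entropy μ U + entropy μ V - entropy μ (fun ω => (U ω, V ω))

/-- The length-`k` prefix `X^k = (X_1, …, X_k)` of the process `X_1, …, X_n`. -/
def pref {Ω 𝒳 : Type*} {n : ℕ} (X : Fin n → Ω → 𝒳) (k : ℕ) (hk : k ≤ n) :
    Ω → (Fin k → 𝒳) :=
  fun ω j => X (Fin.castLE hk j) ω

lemma probOf_comp_inj {Ω S T : Type*} [MeasurableSpace Ω] (μ : Measure Ω)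
    (Z : Ω → S) {f : S → T} (hf : Function.Injective f) (s : S) :
    probOf μ (fun ω => f (Z ω)) (f s) = probOf μ Z s := by
  simp [probOf, hf.eq_iff]

lemma entropy_comp_inj {Ω S T : Type*} [MeasurableSpace Ω] [Fintype S] [Fintype T]
    (μ : Measure Ω) (Z : Ω → S) {f : S → T} (hf : Function.Injective f) :
    entropy μ (fun ω => f (Z ω)) = entropy μ Z := by
  classical
  unfold entropy
  congr 1
  have h1 : (∑ t : T, probOf μ (fun ω => f (Z ω)) t * Real.log (probOf μ (fun ω => f (Z ω)) t))
      = ∑ t ∈ Finset.univ.image f, probOf μ (fun ω => f (Z ω)) t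
          * Real.log (probOf μ (fun ω => f (Z ω)) t) := by
    refine (Finset.sum_subset (Finset.subset_univ _) fun t _ ht => ?_).symm
    have h0 : probOf μ (fun ω => f (Z ω)) t = 0 := by
      have : {ω | f (Z ω) = t} = (∅ : Set Ω) := by
        ext ω
        simp only [Set.mem_setOf_eq, Set.mem_empty_iff_false, iff_false]
        intro h
        exact ht (Finset.mem_image.2 ⟨Z ω, Finset.mem_univ _, h⟩)
      simp [probOf, this]
    simp [h0]
  rw [h1, Finset.sum_image (fun a _ b _ h => hf h)]
  exact Finset.sum_congr rfl fun s _ => by rw [probOf_comp_inj μ Z hf]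

lemma entropy_unique {Ω S : Type*} [MeasurableSpace Ω] [Fintype S] [Unique S]
    (μ : Measure Ω) [IsProbabilityMeasure μ] (Z : Ω → S) :
    entropy μ Z = 0 := by
  have h : {ω | Z ω = (default : S)} = Set.univ := by
    ext ω; simp [Subsingleton.elim (Z ω) default]
  rw [entropy, Finset.univ_unique, Finset.sum_singleton]
  simp [probOf, h]

lemma snocSplit_injective {α : Type*} {k : ℕ} :
    Function.Injective (fun v : Fin (k+1) → α =>
      (v (Fin.last k), fun j : Fin k => v j.castSucc)) := by
  intro v w h
  simp only [Prod.mk.injEq] at h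
  funext j
  induction j using Fin.lastCases with
  | last => exact h.1
  | cast j => exact congrFun h.2 j

lemma fstSplit_injective {α β : Type*} {k : ℕ} :
    Function.Injective (fun p : (Fin (k+1) → α) × (Fin k → β) =>
      ((p.1 (Fin.last k), p.2), fun j : Fin k => p.1 j.castSucc)) := by
  rintro ⟨v, w⟩ ⟨v', w'⟩ h
  simp only [Prod.mk.injEq] at h
  obtain ⟨⟨h1, h2⟩, h3⟩ := h
  simp only [Prod.mk.injEq]
  refine ⟨?_, h2⟩
  funext j
  induction j using Fin.lastCases with
  | last => exact h1
  | cast j => exact congrFun h3 j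

lemma sndSplit_injective {γ β : Type*} {k : ℕ} :
    Function.Injective (fun p : γ × (Fin (k+1) → β) =>
      ((p.1, p.2 (Fin.last k)), fun j : Fin k => p.2 j.castSucc)) := by
  rintro ⟨v, w⟩ ⟨v', w'⟩ h
  simp only [Prod.mk.injEq] at h
  obtain ⟨⟨h1, h2⟩, h3⟩ := h
  simp only [Prod.mk.injEq]
  refine ⟨h1, ?_⟩
  funext j
  induction j using Fin.lastCases with
  | last => exact h2
  | cast j => exact congrFun h3 j


/-- Massey's identity: if there is no feedback, i.e. `I(X_i ; Y^{i−1} | X^{i−1}) = 0`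
for every `i ∈ {1,…,n}`, then the mutual information `I(X^n ; Y^n)` equals the directed
information `I(X^n → Y^n) = ∑_{i=1}^n I(X^i ; Y_i | Y^{i−1})`. -/
theorem massey_mutualInfo_eq_directedInfo {Ω 𝒳 𝒴 : Type*} [MeasurableSpace Ω]
    [Fintype 𝒳] [MeasurableSpace 𝒳] [MeasurableSingletonClass 𝒳]
    [Fintype 𝒴] [MeasurableSpace 𝒴] [MeasurableSingletonClass 𝒴]
    (μ : Measure Ω) [IsProbabilityMeasure μ] {n : ℕ} (hn : 1 ≤ n)
    (X : Fin n → Ω → 𝒳) (Y : Fin n → Ω → 𝒴)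
    (hX : ∀ i, Measurable (X i)) (hY : ∀ i, Measurable (Y i))
    (hnofb : ∀ i : Fin n,
      condMutualInfo μ (X i) (pref Y i.val i.isLt.le) (pref X i.val i.isLt.le) = 0) :
    mutualInfo μ (pref X n le_rfl) (pref Y n le_rfl)
      = ∑ i : Fin n,
          condMutualInfo μ (pref X (i.val + 1) i.isLt) (Y i) (pref Y i.val i.isLt.le) := by
  classical
  set F : ℕ → ℝ := fun k =>
    if hk : k ≤ n then
      entropy μ (pref X k hk) + entropy μ (pref Y k hk)
        - entropy μ (fun ω => (pref X k hk ω, pref Y k hk ω))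
    else 0 with hF
  have key : ∀ i : Fin n,
      condMutualInfo μ (pref X (i.val + 1) i.isLt) (Y i) (pref Y i.val i.isLt.le)
        = F (i.val + 1) - F i.val := by
    intro i
    have hk : i.val ≤ n := i.isLt.le
    have hk1 : i.val + 1 ≤ n := i.isLt
    set k := i.val with hkdef
    -- recoding equalities
    have e1 : entropy μ (fun ω => (X i ω, pref X k hk ω)) = entropy μ (pref X (k+1) hk1) := by
      have h := entropy_comp_inj μ (pref X (k+1) hk1) (snocSplit_injective (α := 𝒳) (k := k))
      rw [← h]
      congr 1
    have e2 : entropy μ (fun ω => (pref Y k hk ω, pref X k hk ω))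
        = entropy μ (fun ω => (pref X k hk ω, pref Y k hk ω)) :=
      entropy_comp_inj μ (fun ω => (pref X k hk ω, pref Y k hk ω)) Prod.swap_injective
    have e3 : entropy μ (fun ω => ((X i ω, pref Y k hk ω), pref X k hk ω))
        = entropy μ (fun ω => (pref X (k+1) hk1 ω, pref Y k hk ω)) := by
      have h := entropy_comp_inj μ (fun ω => (pref X (k+1) hk1 ω, pref Y k hk ω))
        (fstSplit_injective (α := 𝒳) (β := 𝒴) (k := k))
      rw [← h]
      congr 1
    have e4 : entropy μ (fun ω => (Y i ω, pref Y k hk ω)) = entropy μ (pref Y (k+1) hk1) := by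
      have h := entropy_comp_inj μ (pref Y (k+1) hk1) (snocSplit_injective (α := 𝒴) (k := k))
      rw [← h]
      congr 1
    have e5 : entropy μ (fun ω => ((pref X (k+1) hk1 ω, Y i ω), pref Y k hk ω))
        = entropy μ (fun ω => (pref X (k+1) hk1 ω, pref Y (k+1) hk1 ω)) := by
      have h := entropy_comp_inj μ (fun ω => (pref X (k+1) hk1 ω, pref Y (k+1) hk1 ω))
        (sndSplit_injective (γ := (Fin (k+1) → 𝒳)) (β := 𝒴) (k := k))
      rw [← h]
      congr 1
    have hfb := hnofb i
    simp only [condMutualInfo, condEntropy] at hfb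
    rw [e1, e2, e3] at hfb
    simp only [condMutualInfo, condEntropy, hF]
    rw [e4, e5, dif_pos hk1, dif_pos hk]
    linarith
  calc mutualInfo μ (pref X n le_rfl) (pref Y n le_rfl)
      = F n - F 0 := by
        have hFn : F n = mutualInfo μ (pref X n le_rfl) (pref Y n le_rfl) := by
          simp only [hF]
          rw [dif_pos le_rfl]
          rfl
        haveI : Unique (Fin 0 → 𝒳) := ⟨⟨fun j => j.elim0⟩, fun v => funext fun j => j.elim0⟩
        haveI : Unique (Fin 0 → 𝒴) := ⟨⟨fun j => j.elim0⟩, fun v => funext fun j => j.elim0⟩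
        haveI : Unique ((Fin 0 → 𝒳) × (Fin 0 → 𝒴)) :=
          ⟨⟨(default, default)⟩, fun p => by
            obtain ⟨a, b⟩ := p
            rw [Subsingleton.elim a default, Subsingleton.elim b default]
            rfl⟩
        have hF0 : F 0 = 0 := by
          simp only [hF]
          rw [dif_pos (Nat.zero_le n)]
          rw [entropy_unique, entropy_unique, entropy_unique]
          ring
        rw [hFn, hF0]
        ring
    _ = ∑ m ∈ Finset.range n, (F (m+1) - F m) := (Finset.sum_range_sub F n).symm
    _ = ∑ i : Fin n, (F (i.val + 1) - F i.val) :=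
        (Fin.sum_univ_eq_sum_range (fun m => F (m+1) - F m) n).symm
    _ = ∑ i : Fin n,
          condMutualInfo μ (pref X (i.val + 1) i.isLt) (Y i) (pref Y i.val i.isLt.le) :=
        Finset.sum_congr rfl fun i _ => (key i).symm
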